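/- Let n ≥ 2 and let u : EuclideanSpace ℝ (Fin n) → ℝ be twice continuously differentiable on an open set Ω with ∇u(p) ≠ 0 for all p ∈ Ω, and set N(p) = ∇u(p)/‖∇u(p)‖. Let φ map an interval [0, L] into Ω and satisfy φ'(s) = N(φ(s)) for all s ∈ [0, L]. Then for every s ∈ [0, L], ‖∇u(φ(s))‖ = ‖∇u(φ(0))‖ · exp(∫₀ˢ Q(φ(t))(N(φ(t)), N(φ(t))) / ‖∇u(φ(t))‖ dt), where Q(p) is the Hessian bilinear form of u at p. (Harmonicity of u is not needed for this identity.) -/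

import Mathlib

/-! Along the normal flow `φ' = ∇u/‖∇u‖`, the chain rule gives
`(∇u ∘ φ)' = D²u(φ)(N, ·)` read as a vector, so `(log ‖∇u ∘ φ‖)' = ⟪∇u, D²u(N, ·)⟫ / ‖∇u‖²
= Q(N, N) / ‖∇u‖`, because `∇u = ‖∇u‖ N`. Integrating this (continuous) logarithmic
derivative over `[0, s]` and exponentiating gives the formula. -/

open Set

/-- The Hessian bilinear form of `u` at `p`, applied to `(v, w)`. -/
noncomputable def hessianForm {n : ℕ} (u : EuclideanSpace ℝ (Fin n) → ℝ)
    (p v w : EuclideanSpace ℝ (Fin n)) : ℝ :=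
  fderiv ℝ (fderiv ℝ u) p v w

/-- The unit normal `N(p) = ∇u(p)/‖∇u(p)‖`. -/
noncomputable def unitNormal {n : ℕ} (u : EuclideanSpace ℝ (Fin n) → ℝ)
    (p : EuclideanSpace ℝ (Fin n)) : EuclideanSpace ℝ (Fin n) :=
  ‖gradient u p‖⁻¹ • gradient u p

open InnerProductSpace RealInnerProductSpace

section InnerProductSpace

variable {E : Type*} [NormedAddCommGroup E] [InnerProductSpace ℝ E]

theorem HasDerivAt.log_norm {g : ℝ → E} {g' : E} {t : ℝ} (hg : HasDerivAt g g' t)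
    (h0 : g t ≠ 0) :
    HasDerivAt (fun s => Real.log ‖g s‖) (⟪g t, g'⟫ / ‖g t‖ ^ 2) t := by
  have hsq : HasDerivAt (fun s => Real.log (‖g s‖ ^ 2)) (2 * ⟪g t, g'⟫ / ‖g t‖ ^ 2) t :=
    hg.norm_sq.log (by positivity)
  have hlog : (fun s => Real.log ‖g s‖) = fun s => Real.log (‖g s‖ ^ 2) / 2 := by
    ext s
    rw [Real.log_pow]
    ring
  rw [hlog]
  exact (hsq.div_const 2).congr_deriv (by ring)

variable [CompleteSpace E] {u : E → ℝ}

theorem HasDerivAt.gradient_comp {γ : ℝ → E} {v : E} {t : ℝ} (hγ : HasDerivAt γ v t)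
    (hu : DifferentiableAt ℝ (fderiv ℝ u) (γ t)) :
    HasDerivAt (fun s => gradient u (γ s))
      ((toDual ℝ E).symm (fderiv ℝ (fderiv ℝ u) (γ t) v)) t :=
  ((toDual ℝ E).symm.toContinuousLinearEquiv.hasFDerivAt.comp (γ t)
    hu.hasFDerivAt).comp_hasDerivAt t hγ

theorem ContDiffOn.continuousOn_gradient {Ω : Set E} {k : WithTop ℕ∞} (hu : ContDiffOn ℝ k u Ω)
    (hΩ : IsOpen Ω) (hk : 1 ≤ k) : ContinuousOn (gradient u) Ω :=
  (toDual ℝ E).symm.continuous.comp_continuousOn (hu.continuousOn_fderiv_of_isOpen hΩ hk)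

end InnerProductSpace

theorem eq_mul_exp_integral_of_hasDerivAt_log {g f : ℝ → ℝ} {a b : ℝ}
    (hderiv : ∀ t ∈ uIcc a b, HasDerivAt (fun s => Real.log (g s)) (f t) t)
    (hf : IntervalIntegrable f MeasureTheory.volume a b) (ha : 0 < g a) (hb : 0 < g b) :
    g b = g a * Real.exp (∫ t in a..b, f t) := by
  rw [intervalIntegral.integral_eq_sub_of_hasDerivAt hderiv hf, Real.exp_sub,
    Real.exp_log ha, Real.exp_log hb, mul_div_cancel₀ _ ha.ne']

section Euclidean

variable {n : ℕ} {u : EuclideanSpace ℝ (Fin n) → ℝ}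

theorem gradient_eq_norm_smul_unitNormal (p : EuclideanSpace ℝ (Fin n))
    (h0 : gradient u p ≠ 0) : gradient u p = ‖gradient u p‖ • unitNormal u p := by
  rw [unitNormal, smul_smul, mul_inv_cancel₀ (norm_ne_zero_iff.mpr h0), one_smul]

theorem hasDerivAt_log_norm_gradient_comp {γ : ℝ → EuclideanSpace ℝ (Fin n)} {t : ℝ}
    (hu : DifferentiableAt ℝ (fderiv ℝ u) (γ t)) (h0 : gradient u (γ t) ≠ 0)
    (hγ : HasDerivAt γ (unitNormal u (γ t)) t) :
    HasDerivAt (fun s => Real.log ‖gradient u (γ s)‖)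
      (hessianForm u (γ t) (unitNormal u (γ t)) (unitNormal u (γ t)) /
        ‖gradient u (γ t)‖) t := by
  convert (hγ.gradient_comp hu).log_norm h0 using 1
  have hQ : fderiv ℝ (fderiv ℝ u) (γ t) (unitNormal u (γ t)) (gradient u (γ t)) =
      ‖gradient u (γ t)‖ * hessianForm u (γ t) (unitNormal u (γ t)) (unitNormal u (γ t)) := by
    conv_lhs => rw [gradient_eq_norm_smul_unitNormal _ h0]
    rw [map_smul, smul_eq_mul, hessianForm]
  rw [real_inner_comm, toDual_symm_apply, hQ]
  field_simp [norm_ne_zero_iff.mpr h0]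

theorem continuousOn_unitNormal {s : Set (EuclideanSpace ℝ (Fin n))}
    (hG : ContinuousOn (gradient u) s) (h0 : ∀ p ∈ s, gradient u p ≠ 0) :
    ContinuousOn (unitNormal u) s :=
  (hG.norm.inv₀ fun p hp => norm_ne_zero_iff.mpr (h0 p hp)).smul hG

theorem ContDiffOn.continuousOn_hessianForm_unitNormal_div {Ω : Set (EuclideanSpace ℝ (Fin n))}
    (hu : ContDiffOn ℝ 2 u Ω) (hΩ : IsOpen Ω) (h0 : ∀ p ∈ Ω, gradient u p ≠ 0) :
    ContinuousOn (fun p => hessianForm u p (unitNormal u p) (unitNormal u p) /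
      ‖gradient u p‖) Ω := by
  have hG := hu.continuousOn_gradient hΩ one_le_two
  have hN := continuousOn_unitNormal hG h0
  have hH : ContinuousOn (fderiv ℝ (fderiv ℝ u)) Ω :=
    (hu.fderiv_of_isOpen hΩ le_rfl).continuousOn_fderiv_of_isOpen hΩ le_rfl
  exact ((hH.clm_apply hN).clm_apply hN).div hG.norm
    fun p hp => norm_ne_zero_iff.mpr (h0 p hp)

end Euclidean

theorem gradient_norm_eq_exp_integral_hessian_general
    (n : ℕ)
    (u : EuclideanSpace ℝ (Fin n) → ℝ)
    (Ω : Set (EuclideanSpace ℝ (Fin n))) (hΩ : IsOpen Ω)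
    (hu : ContDiffOn ℝ 2 u Ω)
    (hgrad : ∀ p ∈ Ω, gradient u p ≠ 0)
    (φ : ℝ → EuclideanSpace ℝ (Fin n)) (L : ℝ)
    (hmap : ∀ s ∈ Icc (0 : ℝ) L, φ s ∈ Ω)
    (hflow : ∀ s ∈ Icc (0 : ℝ) L, HasDerivAt φ (unitNormal u (φ s)) s)
    (s : ℝ) (hs : s ∈ Icc (0 : ℝ) L) :
    ‖gradient u (φ s)‖ = ‖gradient u (φ 0)‖ *
      Real.exp (∫ t in (0 : ℝ)..s,
        hessianForm u (φ t) (unitNormal u (φ t)) (unitNormal u (φ t)) /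
          ‖gradient u (φ t)‖) := by
  have hsub : uIcc 0 s ⊆ Icc 0 L := by
    rw [uIcc_of_le hs.1]; exact Icc_subset_Icc le_rfl hs.2
  have hpos : ∀ t ∈ Icc 0 L, 0 < ‖gradient u (φ t)‖ := fun t ht =>
    norm_pos_iff.mpr (hgrad _ (hmap t ht))
  have hderiv : ∀ t ∈ Icc 0 L, HasDerivAt (fun s => Real.log ‖gradient u (φ s)‖)
      (hessianForm u (φ t) (unitNormal u (φ t)) (unitNormal u (φ t)) /
        ‖gradient u (φ t)‖) t := fun t ht =>
    hasDerivAt_log_norm_gradient_comp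
      (((hu.contDiffAt (hΩ.mem_nhds (hmap t ht))).fderiv_right le_rfl).differentiableAt
        one_ne_zero)
      (hgrad _ (hmap t ht)) (hflow t ht)
  have hφ : ContinuousOn φ (Icc 0 L) := fun t ht => (hflow t ht).continuousAt.continuousWithinAt
  have hcont := (hu.continuousOn_hessianForm_unitNormal_div hΩ hgrad).comp hφ hmap
  exact eq_mul_exp_integral_of_hasDerivAt_log (fun t ht => hderiv t (hsub ht))
    ((hcont.mono hsub).intervalIntegrable) (hpos 0 (hsub left_mem_uIcc))
    (hpos s (hsub right_mem_uIcc))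

theorem gradient_norm_eq_exp_integral_hessian
    (n : ℕ) (hn : 2 ≤ n)
    (u : EuclideanSpace ℝ (Fin n) → ℝ)
    (Ω : Set (EuclideanSpace ℝ (Fin n))) (hΩ : IsOpen Ω)
    (hu : ContDiffOn ℝ 2 u Ω)
    (hgrad : ∀ p ∈ Ω, gradient u p ≠ 0)
    (φ : ℝ → EuclideanSpace ℝ (Fin n)) (L : ℝ)
    (hmap : ∀ s ∈ Icc (0 : ℝ) L, φ s ∈ Ω)
    (hflow : ∀ s ∈ Icc (0 : ℝ) L, HasDerivAt φ (unitNormal u (φ s)) s)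
    (s : ℝ) (hs : s ∈ Icc (0 : ℝ) L) :
    ‖gradient u (φ s)‖ = ‖gradient u (φ 0)‖ *
      Real.exp (∫ t in (0 : ℝ)..s,
        hessianForm u (φ t) (unitNormal u (φ t)) (unitNormal u (φ t)) /
          ‖gradient u (φ t)‖) :=
  gradient_norm_eq_exp_integral_hessian_general n u Ω hΩ hu hgrad φ L hmap hflow s hs
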